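/- arXiv:2312.13638 — 2 statements merged into one kernel-verified Lean document; each statement's English description precedes it below -/
import Mathlib

section
/- Let G be a cubic graph and M = {M₁, M₂, M₃} three perfect matchings with empty intersection M₁ ∩ M₂ ∩ M₃ = ∅. Then every connected component of the core of M is an even circuit in which uncovered edges and doubly covered edges alternate. -/
/-!
Each perfect matching uses exactly one of the three edges at a vertex of a cubic graph, so the
coverage numbers of these edges sum to 3; as no edge lies in all three matchings, every coverage
is at most 2, and at a vertex of the core the coverages are therefore exactly 0, 1 and 2. Hence
every core vertex has core degree 2, and the uncovered edges form a perfect matching of each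
component of the core, which therefore has an even number of vertices.
-/

open Finset

def SimpleGraph.IsCubic {V : Type*} [Fintype V] (G : SimpleGraph V)
    [DecidableRel G.Adj] : Prop :=
  ∀ v : V, G.degree v = 3

def SimpleGraph.IsPM {V : Type*} (G : SimpleGraph V) (M : Finset (Sym2 V)) : Prop :=
  (↑M ⊆ G.edgeSet) ∧ ∀ v : V, ∃! e, e ∈ M ∧ v ∈ e

def cov {V : Type*} [DecidableEq V] (M₁ M₂ M₃ : Finset (Sym2 V)) (e : Sym2 V) : ℕ :=
  (if e ∈ M₁ then 1 else 0) + (if e ∈ M₂ then 1 else 0) + (if e ∈ M₃ then 1 else 0)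

/-- The core of a 3-array with empty intersection: the subgraph formed by the edges
lying in 0 or 2 of the three matchings. -/
def coreGraph {V : Type*} [DecidableEq V] (G : SimpleGraph V)
    (M₁ M₂ M₃ : Finset (Sym2 V)) : SimpleGraph V where
  Adj u v := G.Adj u v ∧ (cov M₁ M₂ M₃ s(u, v) = 0 ∨ cov M₁ M₂ M₃ s(u, v) = 2)
  symm := by
    constructor
    intro u v h
    exact ⟨h.1.symm, by rw [Sym2.eq_swap]; exact h.2⟩
  loopless := by
    constructor
    intro v h
    exact G.loopless.irrefl v h.1

open SimpleGraph

theorem Finset.card_filter_eq_zero_and_card_filter_eq_two_of_sum_eq_three {ι : Type*}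
    {s : Finset ι} {c : ι → ℕ}
    (hs : #s = 3) (hc : ∀ i ∈ s, c i ≤ 2) (hsum : ∑ i ∈ s, c i = 3)
    (h : ∃ i ∈ s, c i = 0 ∨ c i = 2) :
    #{i ∈ s | c i = 0} = 1 ∧ #{i ∈ s | c i = 2} = 1 := by
  have hmaps : ∀ i ∈ s, c i ∈ range 3 := fun i hi => mem_range.2 (Nat.lt_succ_of_le (hc i hi))
  have hcount := card_eq_sum_card_fiberwise hmaps
  have hweight : ∑ i ∈ s, c i = ∑ j ∈ range 3, j * #{i ∈ s | c i = j} := by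
    rw [← sum_fiberwise_of_maps_to hmaps]
    refine sum_congr rfl fun j _ => ?_
    rw [sum_congr rfl fun i hi => (mem_filter.1 hi).2, sum_const, smul_eq_mul, mul_comm]
  obtain ⟨i, hi, hci⟩ := h
  have hpos : 0 < #{i ∈ s | c i = 0} + #{i ∈ s | c i = 2} := by
    rcases hci with hci | hci
    · exact Nat.add_pos_left (card_pos.2 ⟨i, mem_filter.2 ⟨hi, hci⟩⟩) _
    · exact Nat.add_pos_right _ (card_pos.2 ⟨i, mem_filter.2 ⟨hi, hci⟩⟩)
  simp only [sum_range_succ, sum_range_zero] at hcount hweight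
  omega

namespace SimpleGraph

variable {V : Type*} {G : SimpleGraph V}

theorem mem_support_of_connectedComponentMk_eq {u v : V} (hv : v ∈ G.support)
    (h : G.connectedComponentMk u = G.connectedComponentMk v) : u ∈ G.support := by
  rcases eq_or_ne u v with rfl | huv
  · exact hv
  · exact mem_support_of_reachable huv (ConnectedComponent.exact h)

variable [DecidableEq V]

theorem card_filter_incidenceFinset (v : V) [Fintype (G.neighborSet v)] (p : Sym2 V → Prop)
    [DecidablePred p] :
    #{e ∈ G.incidenceFinset v | p e} = #{w ∈ G.neighborFinset v | p s(v, w)} := by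
  symm
  refine card_bij (fun w _ => s(v, w)) (fun w hw => ?_) (fun _ _ _ _ h => Sym2.congr_right.1 h)
    (fun e he => ?_)
  · rw [mem_filter, mem_neighborFinset] at hw
    rw [mem_filter, mem_incidenceFinset]
    exact ⟨G.mk'_mem_incidenceSet_left_iff.2 hw.1, hw.2⟩
  · rw [mem_filter, mem_incidenceFinset] at he
    obtain ⟨⟨he, hve⟩, hp⟩ := he
    refine ⟨Sym2.Mem.other' hve, ?_, Sym2.other_spec' hve⟩
    rw [mem_filter, mem_neighborFinset, ← mem_edgeSet, Sym2.other_spec' hve]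
    exact ⟨he, hp⟩

theorem IsPM.card_filter_incidenceFinset_mem {M : Finset (Sym2 V)} (hM : G.IsPM M) (v : V)
    [Fintype (G.neighborSet v)] : #{e ∈ G.incidenceFinset v | e ∈ M} = 1 := by
  obtain ⟨e, ⟨heM, hve⟩, huniq⟩ := hM.2 v
  refine card_eq_one.2 ⟨e, eq_singleton_iff_unique_mem.2 ⟨?_, fun f hf => ?_⟩⟩
  · exact mem_filter.2 ⟨(mem_incidenceFinset ..).2 ⟨hM.1 heM, hve⟩, heM⟩
  · obtain ⟨hf, hfM⟩ := mem_filter.1 hf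
    exact huniq f ⟨hfM, ((mem_incidenceFinset ..).1 hf).2⟩

end SimpleGraph

section Core

variable {V : Type*} [DecidableEq V] {G : SimpleGraph V} {M₁ M₂ M₃ : Finset (Sym2 V)}

theorem cov_le_two (hreg : M₁ ∩ M₂ ∩ M₃ = ∅) (e : Sym2 V) : cov M₁ M₂ M₃ e ≤ 2 := by
  have : e ∉ M₁ ∩ M₂ ∩ M₃ := hreg ▸ notMem_empty e
  simp only [mem_inter, not_and] at this
  unfold cov
  split_ifs <;> simp_all

theorem sum_cov_incidenceFinset (h₁ : G.IsPM M₁) (h₂ : G.IsPM M₂) (h₃ : G.IsPM M₃) (v : V)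
    [Fintype (G.neighborSet v)] : ∑ e ∈ G.incidenceFinset v, cov M₁ M₂ M₃ e = 3 := by
  simp only [cov, sum_add_distrib, sum_boole, Nat.cast_id, h₁.card_filter_incidenceFinset_mem,
    h₂.card_filter_incidenceFinset_mem, h₃.card_filter_incidenceFinset_mem]

def uncoveredSubgraph (G : SimpleGraph V) (M₁ M₂ M₃ : Finset (Sym2 V)) :
    (coreGraph G M₁ M₂ M₃).Subgraph where
  verts := {u | ∃ w, G.Adj u w ∧ cov M₁ M₂ M₃ s(u, w) = 0}
  Adj u w := G.Adj u w ∧ cov M₁ M₂ M₃ s(u, w) = 0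
  adj_sub h := ⟨h.1, Or.inl h.2⟩
  edge_vert h := ⟨_, h⟩
  symm := ⟨fun _ _ h => ⟨h.1.symm, Sym2.eq_swap ▸ h.2⟩⟩

variable [Fintype V] [DecidableRel G.Adj]

theorem card_uncovered_eq_one_and_card_doublyCovered_eq_one (hG : G.IsCubic) (h₁ : G.IsPM M₁)
    (h₂ : G.IsPM M₂) (h₃ : G.IsPM M₃) (hreg : M₁ ∩ M₂ ∩ M₃ = ∅) {v : V}
    (hv : v ∈ (coreGraph G M₁ M₂ M₃).support) :
    #{e ∈ G.incidenceFinset v | cov M₁ M₂ M₃ e = 0} = 1 ∧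
      #{e ∈ G.incidenceFinset v | cov M₁ M₂ M₃ e = 2} = 1 := by
  obtain ⟨u, hadj, hcov⟩ := (mem_support _).1 hv
  refine card_filter_eq_zero_and_card_filter_eq_two_of_sum_eq_three ?_
    (fun e _ => cov_le_two hreg e) (sum_cov_incidenceFinset h₁ h₂ h₃ v) ⟨s(v, u), ?_, hcov⟩
  · rw [card_incidenceFinset_eq_degree, hG v]
  · exact (mem_incidenceFinset ..).2 (G.mk'_mem_incidenceSet_left_iff.2 hadj)

open scoped Classical in
theorem card_coreGraph_adj_eq_two (hG : G.IsCubic) (h₁ : G.IsPM M₁)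
    (h₂ : G.IsPM M₂) (h₃ : G.IsPM M₃) (hreg : M₁ ∩ M₂ ∩ M₃ = ∅) {v : V}
    (hv : v ∈ (coreGraph G M₁ M₂ M₃).support) :
    #{u | (coreGraph G M₁ M₂ M₃).Adj v u} = 2 := by
  obtain ⟨h0, h2⟩ := card_uncovered_eq_one_and_card_doublyCovered_eq_one hG h₁ h₂ h₃ hreg hv
  have hdisj : Disjoint {e ∈ G.incidenceFinset v | cov M₁ M₂ M₃ e = 0}
      {e ∈ G.incidenceFinset v | cov M₁ M₂ M₃ e = 2} :=
    disjoint_filter.2 fun _ _ h => by omega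
  calc #{u | (coreGraph G M₁ M₂ M₃).Adj v u}
      = #{u ∈ G.neighborFinset v | cov M₁ M₂ M₃ s(v, u) = 0 ∨ cov M₁ M₂ M₃ s(v, u) = 2} := by
        congr 1
        ext u
        simp only [mem_filter, mem_univ, mem_neighborFinset, true_and]
        rfl
    _ = #{e ∈ G.incidenceFinset v | cov M₁ M₂ M₃ e = 0 ∨ cov M₁ M₂ M₃ e = 2} := by
        rw [card_filter_incidenceFinset]
    _ = 2 := by rw [filter_or, card_union_of_disjoint hdisj, h0, h2]

theorem uncoveredSubgraph_isMatching (hG : G.IsCubic) (h₁ : G.IsPM M₁)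
    (h₂ : G.IsPM M₂) (h₃ : G.IsPM M₃) (hreg : M₁ ∩ M₂ ∩ M₃ = ∅) :
    (uncoveredSubgraph G M₁ M₂ M₃).IsMatching := by
  rintro u ⟨w, huw⟩
  have hu : u ∈ (coreGraph G M₁ M₂ M₃).support := ⟨w, huw.1, Or.inl huw.2⟩
  have h0 := (card_uncovered_eq_one_and_card_doublyCovered_eq_one hG h₁ h₂ h₃ hreg hu).1
  rw [card_filter_incidenceFinset, card_eq_one_iff_existsUnique] at h0
  simp only [mem_filter, mem_neighborFinset] at h0
  exact h0

theorem mem_uncoveredSubgraph_verts_of_mem_support (hG : G.IsCubic) (h₁ : G.IsPM M₁)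
    (h₂ : G.IsPM M₂) (h₃ : G.IsPM M₃) (hreg : M₁ ∩ M₂ ∩ M₃ = ∅) {v : V}
    (hv : v ∈ (coreGraph G M₁ M₂ M₃).support) : v ∈ (uncoveredSubgraph G M₁ M₂ M₃).verts := by
  have h0 := (card_uncovered_eq_one_and_card_doublyCovered_eq_one hG h₁ h₂ h₃ hreg hv).1
  rw [card_filter_incidenceFinset] at h0
  obtain ⟨w, hw⟩ := card_pos.1 (h0 ▸ Nat.one_pos)
  rw [mem_filter, mem_neighborFinset] at hw
  exact ⟨w, hw⟩

open scoped Classical in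
theorem even_card_connectedComponent_coreGraph (hG : G.IsCubic) (h₁ : G.IsPM M₁)
    (h₂ : G.IsPM M₂) (h₃ : G.IsPM M₃) (hreg : M₁ ∩ M₂ ∩ M₃ = ∅) {v : V}
    (hv : v ∈ (coreGraph G M₁ M₂ M₃).support) :
    Even #{u | (coreGraph G M₁ M₂ M₃).connectedComponentMk u =
      (coreGraph G M₁ M₂ M₃).connectedComponentMk v} := by
  set c := (coreGraph G M₁ M₂ M₃).connectedComponentMk v
  have hsupp : c.supp ⊆ (uncoveredSubgraph G M₁ M₂ M₃).verts := fun u hu =>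
    mem_uncoveredSubgraph_verts_of_mem_support hG h₁ h₂ h₃ hreg
      (mem_support_of_connectedComponentMk_eq hv hu)
  have := ((uncoveredSubgraph_isMatching hG h₁ h₂ h₃ hreg).induce_connectedComponent c).even_card
  simp only [Subgraph.induce_verts, Set.inter_eq_right.2 hsupp] at this
  convert this using 2
  ext u
  simp only [ConnectedComponent.eq, mem_filter, mem_univ, true_and, Set.mem_toFinset,
    ConnectedComponent.mem_supp_iff, c]

end Core

open scoped Classical in
/-- Exactly one uncovered and one doubly covered edge at each core vertex makes the core
2-regular and alternating; an even number of vertices per component gives even length. -/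
theorem core_components_even_alternating_circuits {V : Type*} [Fintype V]
    [DecidableEq V] (G : SimpleGraph V) [DecidableRel G.Adj] (hG : G.IsCubic)
    (M₁ M₂ M₃ : Finset (Sym2 V)) (h₁ : G.IsPM M₁) (h₂ : G.IsPM M₂) (h₃ : G.IsPM M₃)
    (hreg : M₁ ∩ M₂ ∩ M₃ = ∅) :
    ∀ v : V, (∃ u, (coreGraph G M₁ M₂ M₃).Adj v u) →
      ((G.edgeFinset.filter (fun f => v ∈ f ∧ cov M₁ M₂ M₃ f = 0)).card = 1 ∧
       (G.edgeFinset.filter (fun f => v ∈ f ∧ cov M₁ M₂ M₃ f = 2)).card = 1 ∧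
       (Finset.univ.filter (fun u => (coreGraph G M₁ M₂ M₃).Adj v u)).card = 2) ∧
      Even ((Finset.univ.filter (fun u =>
        (coreGraph G M₁ M₂ M₃).connectedComponentMk u =
          (coreGraph G M₁ M₂ M₃).connectedComponentMk v)).card) := by
  intro v hv
  have hcore : v ∈ (coreGraph G M₁ M₂ M₃).support := (mem_support _).2 hv
  obtain ⟨h0, h2⟩ := card_uncovered_eq_one_and_card_doublyCovered_eq_one hG h₁ h₂ h₃ hreg hcore
  rw [incidenceFinset_eq_filter, filter_filter] at h0 h2
  exact ⟨⟨h0, h2, card_coreGraph_adj_eq_two hG h₁ h₂ h₃ hreg hcore⟩,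
    even_card_connectedComponent_coreGraph hG h₁ h₂ h₃ hreg hcore⟩
end

section
/- Let G be a bridgeless cubic graph admitting two complementary regular 3-arrays with common core Q, and for i ∈ {1,2} let Pᵢ be the set of edges uncovered by the i-th array. Then P₁ and P₂ are disjoint matchings, P₁ ∪ P₂ = E(Q) is a disjoint union of circuits, and for each i the graph G − Pᵢ admits a nowhere-zero Z₂×Z₂-flow (equivalently, a nowhere-zero 4-flow). -/
open Finset

/-- A nowhere-zero `Z₂×Z₂`-flow on the spanning subgraph of `G` with edge set
`G.edgeFinset \ P`. -/
def HasNZFlowOff {V : Type*} [Fintype V] [DecidableEq V] (G : SimpleGraph V)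
    [DecidableRel G.Adj] (P : Finset (Sym2 V)) : Prop :=
  ∃ φ : Sym2 V → ZMod 2 × ZMod 2,
    (∀ e ∈ G.edgeFinset \ P, φ e ≠ 0) ∧
    ∀ v : V, ∑ e ∈ (G.edgeFinset \ P).filter (fun e => v ∈ e), φ e = 0

/-!
At a vertex of a cubic graph, the three perfect matchings of a regular 3-array cover the three
incident edges with multiplicities summing to 3, each at most 2; so the multiplicities are
(1,1,1) or (0,1,2). Hence the uncovered edges form a matching and the core meets every vertex
in 0 or 2 edges. For complementary arrays, an edge doubly covered by the first array is
uncovered by the second: otherwise it and the uncovered edge of the first array at one of its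
ends would be two doubly covered edges of the second array at one vertex. With χᵢ the indicator
of the i-th matching, (χ₁ + χ₂, χ₂ + χ₃) is a Z₂×Z₂-flow, since each χᵢ sums to 1 at every
vertex, and it vanishes exactly on the uncovered edges.
-/

theorem Finset.card_filter_of_sum_eq_three {α : Type*} {s : Finset α} {f : α → ℕ}
    (hs : #s = 3) (hf : ∀ x ∈ s, f x ≤ 2) (hsum : ∑ x ∈ s, f x = 3) :
    #{x ∈ s | f x = 0} = #{x ∈ s | f x = 2} ∧ #{x ∈ s | f x = 2} ≤ 1 ∧
      #{x ∈ s | f x ≠ 1} = 2 * #{x ∈ s | f x = 2} := by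
  classical
  obtain ⟨a, b, c, hab, hac, hbc, rfl⟩ := card_eq_three.mp hs
  simp only [mem_insert, mem_singleton, forall_eq_or_imp, forall_eq] at hf
  simp only [card_filter, sum_insert, mem_insert, mem_singleton, hab, hac, hbc, false_or,
    not_false_eq_true, sum_singleton] at hsum ⊢
  split_ifs <;> omega

namespace SimpleGraph

variable {V : Type*}

theorem IsPM.card_filter_mem [DecidableEq V] {G : SimpleGraph V} {M : Finset (Sym2 V)}
    (hM : G.IsPM M) (v : V) : #{e ∈ M | v ∈ e} = 1 :=
  card_eq_one_iff_existsUnique.mpr (by simpa only [mem_filter] using hM.2 v)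

section

variable [Fintype V] [DecidableEq V] {G : SimpleGraph V} [DecidableRel G.Adj]

theorem IsPM.card_incidenceFinset_filter_mem {M : Finset (Sym2 V)} (hM : G.IsPM M) (v : V) :
    #{e ∈ G.incidenceFinset v | e ∈ M} = 1 := by
  rw [incidenceFinset_eq_filter, filter_filter, ← hM.card_filter_mem v]
  congr 1
  ext e
  simp only [mem_filter, mem_edgeFinset]
  exact ⟨fun h => ⟨h.2.2, h.2.1⟩, fun h => ⟨hM.1 h.1, h.2, h.1⟩⟩

theorem filter_incidenceFinset_eq (p : Sym2 V → Prop) [DecidablePred p] (v : V) :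
    {e ∈ G.incidenceFinset v | p e} = {e ∈ {e ∈ G.edgeFinset | p e} | v ∈ e} := by
  rw [filter_comm, incidenceFinset_eq_filter]

theorem IsPM.sum_incidenceFinset_indicator {M : Finset (Sym2 V)} (hM : G.IsPM M) (v : V) :
    ∑ e ∈ G.incidenceFinset v, (if e ∈ M then (1 : ZMod 2) else 0) = 1 := by
  rw [sum_boole, hM.card_incidenceFinset_filter_mem, Nat.cast_one]

end

structure IsRegular3Array [DecidableEq V] (G : SimpleGraph V) (M₁ M₂ M₃ : Finset (Sym2 V)) :
    Prop where
  isPM₁ : G.IsPM M₁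
  isPM₂ : G.IsPM M₂
  isPM₃ : G.IsPM M₃
  inter_eq_empty : M₁ ∩ M₂ ∩ M₃ = ∅

theorem cov_eq_zero_iff [DecidableEq V] {M₁ M₂ M₃ : Finset (Sym2 V)} {e : Sym2 V} :
    cov M₁ M₂ M₃ e = 0 ↔ e ∉ M₁ ∧ e ∉ M₂ ∧ e ∉ M₃ := by
  unfold cov
  split_ifs <;> simp_all

namespace IsRegular3Array

variable [DecidableEq V] {G : SimpleGraph V} {M₁ M₂ M₃ N₁ N₂ N₃ : Finset (Sym2 V)}

theorem cov_le_two (hM : G.IsRegular3Array M₁ M₂ M₃) (e : Sym2 V) : cov M₁ M₂ M₃ e ≤ 2 := by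
  have : e ∉ M₁ ∩ M₂ ∩ M₃ := by simp [hM.inter_eq_empty]
  unfold cov
  split_ifs <;> simp_all

variable [Fintype V] [DecidableRel G.Adj]

theorem sum_cov_incidenceFinset (hM : G.IsRegular3Array M₁ M₂ M₃) (v : V) :
    ∑ e ∈ G.incidenceFinset v, cov M₁ M₂ M₃ e = 3 := by
  simp only [cov, sum_add_distrib, sum_boole, Nat.cast_id,
    hM.isPM₁.card_incidenceFinset_filter_mem, hM.isPM₂.card_incidenceFinset_filter_mem,
    hM.isPM₃.card_incidenceFinset_filter_mem]

theorem card_incidenceFinset_filter_cov (hM : G.IsRegular3Array M₁ M₂ M₃) (hG : G.IsCubic)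
    (v : V) :
    #{e ∈ G.incidenceFinset v | cov M₁ M₂ M₃ e = 0} =
        #{e ∈ G.incidenceFinset v | cov M₁ M₂ M₃ e = 2} ∧
      #{e ∈ G.incidenceFinset v | cov M₁ M₂ M₃ e = 2} ≤ 1 ∧
      #{e ∈ G.incidenceFinset v | cov M₁ M₂ M₃ e ≠ 1} =
        2 * #{e ∈ G.incidenceFinset v | cov M₁ M₂ M₃ e = 2} :=
  card_filter_of_sum_eq_three (by rw [card_incidenceFinset_eq_degree, hG v])
    (fun e _ => hM.cov_le_two e) (hM.sum_cov_incidenceFinset v)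

theorem hasNZFlowOff (hM : G.IsRegular3Array M₁ M₂ M₃) :
    HasNZFlowOff G {e ∈ G.edgeFinset | cov M₁ M₂ M₃ e = 0} := by
  let χ (M : Finset (Sym2 V)) (e : Sym2 V) : ZMod 2 := if e ∈ M then 1 else 0
  refine ⟨fun e => (χ M₁ e + χ M₂ e, χ M₂ e + χ M₃ e), fun e he => ?_, fun v => ?_⟩
  · have hcov : cov M₁ M₂ M₃ e ≠ 0 := by simp_all
    have hle := hM.cov_le_two e
    unfold cov at hcov hle
    by_cases h₁ : e ∈ M₁ <;> by_cases h₂ : e ∈ M₂ <;> by_cases h₃ : e ∈ M₃ <;>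
      simp_all [χ]
  · have hsum : ∀ M, G.IsPM M → ∑ e ∈ G.incidenceFinset v, χ M e = 1 :=
      fun M hPM => hPM.sum_incidenceFinset_indicator v
    rw [sum_subset (s₂ := G.incidenceFinset v)]
    · simp only [Prod.ext_iff, Prod.fst_sum, Prod.snd_sum, sum_add_distrib, hsum _ hM.isPM₁,
        hsum _ hM.isPM₂, hsum _ hM.isPM₃]
      decide
    · intro e he
      simp_all [incidenceFinset_eq_filter]
    · intro e he heP
      have : cov M₁ M₂ M₃ e = 0 := by simp_all [incidenceFinset_eq_filter]
      simp_all [cov_eq_zero_iff, χ]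

theorem cov_eq_zero_of_cov_eq_two (hG : G.IsCubic) (hM : G.IsRegular3Array M₁ M₂ M₃)
    (hN : G.IsRegular3Array N₁ N₂ N₃)
    (hcore : ∀ e ∈ G.edgeFinset, (cov M₁ M₂ M₃ e ≠ 1 ↔ cov N₁ N₂ N₃ e ≠ 1))
    (hdisj : {e ∈ G.edgeFinset | cov M₁ M₂ M₃ e = 0} ∩
      {e ∈ G.edgeFinset | cov N₁ N₂ N₃ e = 0} = ∅)
    {e : Sym2 V} (he : e ∈ G.edgeFinset) (h2 : cov M₁ M₂ M₃ e = 2) : cov N₁ N₂ N₃ e = 0 := by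
  have core_eq_two : ∀ f ∈ G.edgeFinset, cov M₁ M₂ M₃ f ≠ 1 → cov N₁ N₂ N₃ f ≠ 0 →
      cov N₁ N₂ N₃ f = 2 := fun f hf h1 h0 => by
    have := (hcore f hf).1 h1
    have := hN.cov_le_two f
    omega
  by_contra hN0
  obtain ⟨v, hv⟩ : ∃ v, v ∈ e := ⟨_, e.out_fst_mem⟩
  have hev : e ∈ G.incidenceFinset v := by simp_all [incidenceFinset_eq_filter]
  obtain ⟨f, hf⟩ : {f ∈ G.incidenceFinset v | cov M₁ M₂ M₃ f = 0}.Nonempty := by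
    rw [← card_pos, (hM.card_incidenceFinset_filter_cov hG v).1]
    exact card_pos.mpr ⟨e, mem_filter.mpr ⟨hev, h2⟩⟩
  obtain ⟨hfv, hf0⟩ := mem_filter.mp hf
  have hfE : f ∈ G.edgeFinset := incidenceFinset_subset G v hfv
  have hfN : cov N₁ N₂ N₃ f ≠ 0 := fun h0 => eq_empty_iff_forall_notMem.mp hdisj f
    (mem_inter.mpr ⟨mem_filter.mpr ⟨hfE, hf0⟩, mem_filter.mpr ⟨hfE, h0⟩⟩)
  have hef : e = f := card_le_one.mp (hN.card_incidenceFinset_filter_cov hG v).2.1 e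
    (mem_filter.mpr ⟨hev, core_eq_two e he (by omega) hN0⟩) f
    (mem_filter.mpr ⟨hfv, core_eq_two f hfE (by omega) hfN⟩)
  subst hef
  omega

theorem union_filter_cov_eq_zero (hG : G.IsCubic) (hM : G.IsRegular3Array M₁ M₂ M₃)
    (hN : G.IsRegular3Array N₁ N₂ N₃)
    (hcore : ∀ e ∈ G.edgeFinset, (cov M₁ M₂ M₃ e ≠ 1 ↔ cov N₁ N₂ N₃ e ≠ 1))
    (hdisj : {e ∈ G.edgeFinset | cov M₁ M₂ M₃ e = 0} ∩
      {e ∈ G.edgeFinset | cov N₁ N₂ N₃ e = 0} = ∅) :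
    {e ∈ G.edgeFinset | cov M₁ M₂ M₃ e = 0} ∪ {e ∈ G.edgeFinset | cov N₁ N₂ N₃ e = 0} =
      {e ∈ G.edgeFinset | cov M₁ M₂ M₃ e ≠ 1} := by
  ext e
  simp only [mem_union, mem_filter]
  constructor
  · rintro (⟨he, h0⟩ | ⟨he, h0⟩)
    · exact ⟨he, by omega⟩
    · exact ⟨he, (hcore e he).2 (by omega)⟩
  · rintro ⟨he, h1⟩
    by_cases h0 : cov M₁ M₂ M₃ e = 0
    · exact Or.inl ⟨he, h0⟩
    · have := hM.cov_le_two e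
      exact Or.inr ⟨he, hM.cov_eq_zero_of_cov_eq_two hG hN hcore hdisj he (by omega)⟩

end IsRegular3Array

end SimpleGraph

theorem complementary_arrays_give_flows_general {V : Type*} [Fintype V] [DecidableEq V]
    (G : SimpleGraph V) [DecidableRel G.Adj] (hG : G.IsCubic)
    (M₁ M₂ M₃ N₁ N₂ N₃ : Finset (Sym2 V))
    (hM : G.IsPM M₁ ∧ G.IsPM M₂ ∧ G.IsPM M₃) (hN : G.IsPM N₁ ∧ G.IsPM N₂ ∧ G.IsPM N₃)
    (hMreg : M₁ ∩ M₂ ∩ M₃ = ∅) (hNreg : N₁ ∩ N₂ ∩ N₃ = ∅)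
    (hsamecore : ∀ e ∈ G.edgeFinset, (cov M₁ M₂ M₃ e ≠ 1 ↔ cov N₁ N₂ N₃ e ≠ 1))
    (P₁ P₂ : Finset (Sym2 V))
    (hP₁ : P₁ = G.edgeFinset.filter (fun e => cov M₁ M₂ M₃ e = 0))
    (hP₂ : P₂ = G.edgeFinset.filter (fun e => cov N₁ N₂ N₃ e = 0))
    (hdisj : P₁ ∩ P₂ = ∅) :
    (∀ v : V, (P₁.filter (fun e => v ∈ e)).card ≤ 1) ∧
    (∀ v : V, (P₂.filter (fun e => v ∈ e)).card ≤ 1) ∧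
    P₁ ∪ P₂ = G.edgeFinset.filter (fun e => cov M₁ M₂ M₃ e ≠ 1) ∧
    (∀ v : V, ((P₁ ∪ P₂).filter (fun e => v ∈ e)).card = 0 ∨
      ((P₁ ∪ P₂).filter (fun e => v ∈ e)).card = 2) ∧
    HasNZFlowOff G P₁ ∧ HasNZFlowOff G P₂ := by
  subst hP₁ hP₂
  have hMarr : G.IsRegular3Array M₁ M₂ M₃ := ⟨hM.1, hM.2.1, hM.2.2, hMreg⟩
  have hNarr : G.IsRegular3Array N₁ N₂ N₃ := ⟨hN.1, hN.2.1, hN.2.2, hNreg⟩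
  have hunion := hMarr.union_filter_cov_eq_zero hG hNarr hsamecore hdisj
  refine ⟨fun v => ?_, fun v => ?_, hunion, fun v => ?_, hMarr.hasNZFlowOff, hNarr.hasNZFlowOff⟩
  · have := hMarr.card_incidenceFinset_filter_cov hG v
    rw [← SimpleGraph.filter_incidenceFinset_eq]
    omega
  · have := hNarr.card_incidenceFinset_filter_cov hG v
    rw [← SimpleGraph.filter_incidenceFinset_eq]
    omega
  · have := hMarr.card_incidenceFinset_filter_cov hG v
    rw [hunion, ← SimpleGraph.filter_incidenceFinset_eq]
    omega

/-- Complementary regular 3-arrays yield two disjoint matchings `P₁, P₂` whose union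
is the edge set of the common core, a disjoint union of circuits, and `G − Pᵢ` admits
a nowhere-zero `Z₂×Z₂`-flow for each `i`. -/
theorem complementary_arrays_give_flows {V : Type*} [Fintype V] [DecidableEq V]
    (G : SimpleGraph V) [DecidableRel G.Adj] (hG : G.IsCubic)
    (hbridge : ∀ e ∈ G.edgeSet, ¬ G.IsBridge e)
    (M₁ M₂ M₃ N₁ N₂ N₃ : Finset (Sym2 V))
    (hM : G.IsPM M₁ ∧ G.IsPM M₂ ∧ G.IsPM M₃) (hN : G.IsPM N₁ ∧ G.IsPM N₂ ∧ G.IsPM N₃)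
    (hMreg : M₁ ∩ M₂ ∩ M₃ = ∅) (hNreg : N₁ ∩ N₂ ∩ N₃ = ∅)
    (hsamecore : ∀ e ∈ G.edgeFinset, (cov M₁ M₂ M₃ e ≠ 1 ↔ cov N₁ N₂ N₃ e ≠ 1))
    (P₁ P₂ : Finset (Sym2 V))
    (hP₁ : P₁ = G.edgeFinset.filter (fun e => cov M₁ M₂ M₃ e = 0))
    (hP₂ : P₂ = G.edgeFinset.filter (fun e => cov N₁ N₂ N₃ e = 0))
    (hdisj : P₁ ∩ P₂ = ∅) :
    (∀ v : V, (P₁.filter (fun e => v ∈ e)).card ≤ 1) ∧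
    (∀ v : V, (P₂.filter (fun e => v ∈ e)).card ≤ 1) ∧
    P₁ ∪ P₂ = G.edgeFinset.filter (fun e => cov M₁ M₂ M₃ e ≠ 1) ∧
    (∀ v : V, ((P₁ ∪ P₂).filter (fun e => v ∈ e)).card = 0 ∨
      ((P₁ ∪ P₂).filter (fun e => v ∈ e)).card = 2) ∧
    HasNZFlowOff G P₁ ∧ HasNZFlowOff G P₂ :=
  complementary_arrays_give_flows_general G hG M₁ M₂ M₃ N₁ N₂ N₃ hM hN hMreg hNreg hsamecore P₁ P₂
    hP₁ hP₂ hdisj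
end
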